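/- Let Q be an m-coloured quiver in the class Q_n^m and let Q' be its 0-coloured part (these Q' are precisely the quivers of m-cluster-tilted algebras of type A_n). Then: (1) every vertex x of Q' is the source of at most two arrows and the target of at most two arrows, i.e. the sets s^{-1}(x) and t^{-1}(x) have cardinality at most two; and (2) the only cycles which can occur in Q' are oriented cycles of length m + 2. -/

import Mathlib

namespace MutClassAn

open Finset

variable {V : Type} [Fintype V] [DecidableEq V]

/-- `M i j c` is the number of arrows from `i` to `j` of colour `c`.
An `m`-coloured quiver has no loops, is monochromatic and skew-symmetric
(`c.rev = m - c` in `Fin (m+1)`). -/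
def IsColouredQuiver {m : ℕ} (M : V → V → Fin (m + 1) → ℕ) : Prop :=
  (∀ i c, M i i c = 0) ∧
  (∀ i j c c', M i j c ≠ 0 → M i j c' ≠ 0 → c = c') ∧
  (∀ i j c, M i j c = M j i c.rev)

/-- A coloured quiver is simple if there is at most one arrow between any two
vertices in each direction. -/
def IsSimpleCQ {m : ℕ} (M : V → V → Fin (m + 1) → ℕ) : Prop :=
  ∀ i j : V, (∑ c, M i j c) ≤ 1

/-- Adjacency in the underlying graph. -/
def CQAdj {m : ℕ} (M : V → V → Fin (m + 1) → ℕ) (i j : V) : Prop :=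
  i ≠ j ∧ ∃ c, M i j c ≠ 0

/-- The colour of the (unique, for simple quivers) arrow from `i` to `j`. -/
def colourOf {m : ℕ} (M : V → V → Fin (m + 1) → ℕ) (i j : V) : ℕ :=
  ∑ c : Fin (m + 1), M i j c * c.val

/-- Buan–Thomas coloured quiver mutation at the vertex `j`. -/
def mutate {m : ℕ} (M : V → V → Fin (m + 1) → ℕ) (j : V) :
    V → V → Fin (m + 1) → ℕ := fun i k c =>
  if k = j then M i k (c + 1)
  else if i = j then M i k (c - 1)
  else ((M i k c : ℤ) - ∑ t ∈ Finset.univ.filter (fun t => t ≠ c), (M i k t : ℤ)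
      + ((M i j c : ℤ) - (M i j (c - 1) : ℤ)) * (M j k 0 : ℤ)
      + (M i j (Fin.last m) : ℤ) * ((M j k c : ℤ) - (M j k (c + 1) : ℤ))).toNat

/-- Mutation equivalence: the equivalence relation generated by single mutations. -/
def MutEquiv {m : ℕ} (M M' : V → V → Fin (m + 1) → ℕ) : Prop :=
  Relation.EqvGen (fun A B => ∃ v, mutate A v = B) M M'

/-- A hole is an induced cycle of length at least `4` in the underlying graph. -/
def HasHole {m : ℕ} (M : V → V → Fin (m + 1) → ℕ) : Prop :=
  ∃ k : ℕ, 4 ≤ k ∧ ∃ x : ZMod k → V, Function.Injective x ∧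
    (∀ i, CQAdj M (x i) (x (i + 1))) ∧
    ∀ i j : ZMod k, i ≠ j → j ≠ i + 1 → i ≠ j + 1 → ¬ CQAdj M (x i) (x j)

/-- A clique: a set of pairwise adjacent vertices. -/
def IsCliqueCQ {m : ℕ} (M : V → V → Fin (m + 1) → ℕ) (S : Set V) : Prop :=
  S.Pairwise (CQAdj M)

/-- The set of neighbours of a vertex. -/
def nbrs {m : ℕ} (M : V → V → Fin (m + 1) → ℕ) (v : V) : Set V :=
  {u | CQAdj M v u}

/-- Connectedness of the underlying graph. -/
def CQConnected {m : ℕ} (M : V → V → Fin (m + 1) → ℕ) : Prop :=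
  ∀ u w : V, Relation.ReflTransGen (CQAdj M) u w

/-- Condition (1) of the class `𝒬ₙᵐ`: the neighbourhood of every vertex is covered
by two cliques of sizes `r, k ≤ m + 2` with `r + k = z + 2`, with no arrows between
the two cliques away from the vertex. -/
def Cond1 {m : ℕ} (M : V → V → Fin (m + 1) → ℕ) : Prop :=
  ∀ v : V, (nbrs M v).Nonempty →
    ∃ R K : Finset V, v ∈ R ∧ v ∈ K ∧ IsCliqueCQ M ↑R ∧ IsCliqueCQ M ↑K ∧
      R.card + K.card = (nbrs M v).ncard + 2 ∧ R.card ≤ m + 2 ∧ K.card ≤ m + 2 ∧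
      (∀ u ∈ nbrs M v, u ∈ R ∨ u ∈ K) ∧
      ∀ a ∈ R, a ≠ v → ∀ b ∈ K, b ≠ v → ¬ CQAdj M a b

/-- Condition (2) of the class `𝒬ₙᵐ`: every triangle inside a clique has colour
sum `m - 1` along one of its two orientations (sums taken in `ℤ`). -/
def Cond2 {m : ℕ} (M : V → V → Fin (m + 1) → ℕ) : Prop :=
  ∀ v1 v2 v3 : V, v1 ≠ v2 → v2 ≠ v3 → v1 ≠ v3 →
    CQAdj M v1 v2 → CQAdj M v2 v3 → CQAdj M v1 v3 →
    ((colourOf M v2 v1 : ℤ) + (colourOf M v1 v3 : ℤ) + (colourOf M v3 v2 : ℤ)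
        = (m : ℤ) - 1 ∨
      ((m : ℤ) - colourOf M v2 v1) + ((m : ℤ) - colourOf M v1 v3)
          + ((m : ℤ) - colourOf M v3 v2) = (m : ℤ) - 1)

/-- Membership in the class `𝒬ₙᵐ` (`n` being the cardinality of the vertex set). -/
def MemQClass {m : ℕ} (M : V → V → Fin (m + 1) → ℕ) : Prop :=
  IsColouredQuiver M ∧ IsSimpleCQ M ∧ CQConnected M ∧ ¬ HasHole M ∧ Cond1 M ∧ Cond2 M

/-- An `Aₙ`-quiver: the underlying graph is the path graph on the vertex set. -/
def IsAnQuiver {m : ℕ} (M : V → V → Fin (m + 1) → ℕ) : Prop :=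
  ∃ e : Fin (Fintype.card V) ≃ V,
    ∀ i j : Fin (Fintype.card V),
      CQAdj M (e i) (e j) ↔ (i.val + 1 = j.val ∨ j.val + 1 = i.val)

/-- The coloured quiver on `Fin n` whose underlying graph is the path
`0 — 1 — ⋯ — (n-1)`, with the arrow `j+1 → j` coloured `c j` and the arrow
`j → j+1` coloured `m - c j`. -/
def pathQuiver (m n : ℕ) (c : ℕ → Fin (m + 1)) :
    Fin n → Fin n → Fin (m + 1) → ℕ := fun i j d =>
  if j.val + 1 = i.val ∧ d = c j.val then 1
  else if i.val + 1 = j.val ∧ d = (c i.val).rev then 1 else 0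

/-- Delete all arrows between vertices of `S`. -/
def deleteArrows {m : ℕ} (M : V → V → Fin (m + 1) → ℕ) (S : Finset V) :
    V → V → Fin (m + 1) → ℕ := fun i j c =>
  if i ∈ S ∧ j ∈ S then 0 else M i j c

/-- The connected component of `u` is an `A_k`-quiver (a path) for some `k ≥ 1`. -/
def ComponentIsPath {m : ℕ} (M : V → V → Fin (m + 1) → ℕ) (u : V) : Prop :=
  ∃ (k : ℕ) (x : Fin k → V), 1 ≤ k ∧ Function.Injective x ∧
    Set.range x = {w | Relation.ReflTransGen (CQAdj M) u w} ∧
    ∀ i j : Fin k, CQAdj M (x i) (x j) ↔ (i.val + 1 = j.val ∨ j.val + 1 = i.val)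

/-- An almost extremal clique: deleting its arrows leaves a connected component
which is an `A_k`-quiver for some `k ≥ 1`. -/
def AlmostExtremalClique {m : ℕ} (M : V → V → Fin (m + 1) → ℕ) (S : Finset V) : Prop :=
  IsCliqueCQ M ↑S ∧ ∃ u : V, ComponentIsPath (deleteArrows M S) u

/-- An extremal clique: deleting its arrows leaves a single-vertex component. -/
def ExtremalClique {m : ℕ} (M : V → V → Fin (m + 1) → ℕ) (S : Finset V) : Prop :=
  IsCliqueCQ M ↑S ∧
    ∃ u : V, {w | Relation.ReflTransGen (CQAdj (deleteArrows M S)) u w} = {u}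

/-- A coloured clique structure on a vertex type: colours `c i j ∈ {0,…,m}` with
skew-symmetry `c j i = m - c i j` and the triangle condition. -/
def IsCliqueColouring (m : ℕ) {W : Type} (c : W → W → ℕ) : Prop :=
  (∀ i j : W, i ≠ j → c i j ≤ m) ∧
  (∀ i j : W, i ≠ j → c i j + c j i = m) ∧
  ∀ i j l : W, i ≠ j → j ≠ l → i ≠ l →
    ((c i j : ℤ) + (c j l : ℤ) + (c l i : ℤ) = (m : ℤ) - 1 ∨
      (c i j : ℤ) + (c j l : ℤ) + (c l i : ℤ) = 2 * (m : ℤ) + 1)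

/-- Cyclic successor in `Fin k`. -/
def cyc {k : ℕ} (i : Fin k) : Fin k :=
  ⟨(i.val + 1) % k, Nat.mod_lt _ i.pos⟩

/-- The weight of the Hamiltonian cycle `x 0 → x 1 → ⋯ → x (k-1) → x 0`:
the sum of the colours of its arrows. -/
def cycleWeight {W : Type} (c : W → W → ℕ) {k : ℕ} (x : Fin k → W) : ℤ :=
  ∑ i : Fin k, (c (x i) (x (cyc i)) : ℤ)

/-- The Hamiltonian cycle on `k+1` vertices obtained from the cycle
`x 0 → ⋯ → x (k-1) → x 0` by inserting the vertex `x (Fin.last k)`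
immediately after `x j`. -/
def insertAfter {W : Type} {k : ℕ} (x : Fin (k + 1) → W) (j : Fin k) :
    Fin (k + 1) → W := fun i =>
  if i = 0 then x (Fin.last k)
  else x (Fin.castSucc ⟨(j.val + i.val) % k, Nat.mod_lt _ j.pos⟩)

end MutClassAn

/-!
Shifting colours by one and reading them modulo `m + 2` turns skew-symmetry into antisymmetry
and condition (2) into a cocycle condition on triangles, so on a clique the shifted colours are
differences of a potential, and colour-`0` arrows are steps of `+1`. Two colour-`0` arrows leaving
(or entering) a vertex therefore end in non-adjacent vertices, and condition (1) leaves room for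
at most two pairwise non-adjacent neighbours. In a hole-free quiver satisfying (1) every cycle
spans a clique (split it along a chord and glue the two smaller cliques along the chord), so
along a cycle of the `0`-coloured part the potential moves injectively by steps `±1`. The steps
cannot change sign without revisiting a value, so they all agree and telescope to `±k = 0` in
`ℤ/(m+2)`, while injectivity gives `k ≤ m + 2`.
-/

namespace MutClassAn

variable {V : Type} {m : ℕ} {M : V → V → Fin (m + 1) → ℕ}

theorem CQAdj.symm (hQ : IsColouredQuiver M) {i j : V} (h : CQAdj M i j) : CQAdj M j i := by
  obtain ⟨hne, c, hc⟩ := h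
  exact ⟨hne.symm, c.rev, by rwa [hQ.2.2 j i c.rev, Fin.rev_rev]⟩

theorem cqAdj_of_ne_zero (hQ : IsColouredQuiver M) {i j : V} {c : Fin (m + 1)}
    (h : M i j c ≠ 0) : CQAdj M i j :=
  ⟨fun he => h (he ▸ hQ.1 i c), c, h⟩

theorem colourOf_le (hs : IsSimpleCQ M) (i j : V) : colourOf M i j ≤ m :=
  calc colourOf M i j ≤ ∑ c : Fin (m + 1), M i j c * m :=
        Finset.sum_le_sum fun c _ => Nat.mul_le_mul_left _ (Nat.lt_succ_iff.mp c.isLt)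
    _ = (∑ c, M i j c) * m := (Finset.sum_mul _ _ _).symm
    _ ≤ m := by simpa using Nat.mul_le_mul_right m (hs i j)

theorem colourOf_eq (hQ : IsColouredQuiver M) (hs : IsSimpleCQ M) {i j : V} {c : Fin (m + 1)}
    (h : M i j c ≠ 0) : colourOf M i j = c := by
  have hone : M i j c = 1 :=
    le_antisymm ((Finset.single_le_sum (fun _ _ => Nat.zero_le _) (Finset.mem_univ c)).trans
      (hs i j)) (Nat.one_le_iff_ne_zero.mpr h)
  rw [colourOf, Finset.sum_eq_single c, hone, one_mul]
  · intro d _ hdc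
    rw [Nat.mul_eq_zero]
    exact .inl (by_contra fun hd => hdc (hQ.2.1 i j d c hd h))
  · exact fun hc => absurd (Finset.mem_univ c) hc

theorem colourOf_add_colourOf (hQ : IsColouredQuiver M) (hs : IsSimpleCQ M) {i j : V}
    (h : CQAdj M i j) : colourOf M i j + colourOf M j i = m := by
  obtain ⟨-, c, hc⟩ := h
  have hji : M j i c.rev ≠ 0 := by rwa [hQ.2.2 j i c.rev, Fin.rev_rev]
  rw [colourOf_eq hQ hs hc, colourOf_eq hQ hs hji, Fin.val_rev]
  omega

def shiftedColour (M : V → V → Fin (m + 1) → ℕ) (i j : V) : ZMod (m + 2) :=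
  (colourOf M i j + 1 : ℕ)

theorem shiftedColour_ne_zero (hs : IsSimpleCQ M) (i j : V) : shiftedColour M i j ≠ 0 := by
  rw [shiftedColour, Ne, ZMod.natCast_eq_zero_iff]
  exact fun h => by have := Nat.le_of_dvd (by omega) h; have := colourOf_le hs i j; omega

theorem shiftedColour_swap (hQ : IsColouredQuiver M) (hs : IsSimpleCQ M) {i j : V}
    (h : CQAdj M i j) : shiftedColour M j i = -shiftedColour M i j := by
  rw [eq_neg_iff_add_eq_zero, shiftedColour, shiftedColour, ← Nat.cast_add,
    ZMod.natCast_eq_zero_iff]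
  exact ⟨1, by have := colourOf_add_colourOf hQ hs h; omega⟩

theorem shiftedColour_of_ne_zero (hQ : IsColouredQuiver M) (hs : IsSimpleCQ M) {i j : V}
    (h : M i j 0 ≠ 0) : shiftedColour M i j = 1 := by
  simp [shiftedColour, colourOf_eq hQ hs h]

theorem shiftedColour_triangle (hQ : IsColouredQuiver M) (hc2 : Cond2 M)
    {a b c : V} (hab : a ≠ b) (hbc : b ≠ c) (hac : a ≠ c)
    (h1 : CQAdj M a b) (h2 : CQAdj M b c) (h3 : CQAdj M a c) :
    shiftedColour M a b + shiftedColour M b c + shiftedColour M c a = 0 := by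
  have hm : ((m + 2 : ℕ) : ZMod (m + 2)) = 0 := ZMod.natCast_self _
  simp only [shiftedColour]
  push_cast at hm ⊢
  rcases hc2 b a c hab.symm hac hbc (h1.symm hQ) h3 h2 with H | H <;>
    have H' := congrArg (fun z : ℤ => (z : ZMod (m + 2))) H <;> push_cast at H'
  · linear_combination H' + hm
  · linear_combination -H' + 2 * hm

theorem IsCliqueCQ.exists_potential (hQ : IsColouredQuiver M) (hs : IsSimpleCQ M)
    (hc2 : Cond2 M) {S : Set V} (hS : IsCliqueCQ M S) :
    ∃ φ : V → ZMod (m + 2), ∀ u ∈ S, ∀ w ∈ S, u ≠ w → shiftedColour M u w = φ w - φ u := by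
  classical
  rcases S.eq_empty_or_nonempty with rfl | ⟨p, hp⟩
  · exact ⟨0, by simp⟩
  refine ⟨fun u => if u = p then 0 else shiftedColour M p u, fun u hu w hw huw => ?_⟩
  by_cases hup : u = p
  · subst hup
    simp [Ne.symm huw]
  by_cases hwp : w = p
  · subst hwp
    simpa [hup] using shiftedColour_swap hQ hs (hS hw hu (Ne.symm hup))
  have htri := shiftedColour_triangle hQ hc2 (Ne.symm hup) huw (Ne.symm hwp)
    (hS hp hu (Ne.symm hup)) (hS hu hw huw) (hS hp hw (Ne.symm hwp))
  have hswap := shiftedColour_swap hQ hs (hS hp hw (Ne.symm hwp))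
  simp only [hup, hwp, if_false]
  linear_combination htri - hswap

theorem Cond1.cqAdj_trans (hc1 : Cond1 M) (hQ : IsColouredQuiver M) {v a b c : V}
    (ha : a ∈ nbrs M v) (hb : b ∈ nbrs M v) (hc : c ∈ nbrs M v) (hab : a ≠ b)
    (hac : CQAdj M a c) (hcb : CQAdj M c b) : CQAdj M a b := by
  obtain ⟨R, K, -, -, hR, hK, -, -, -, hcov, hsep⟩ := hc1 v ⟨a, ha⟩
  have hav : a ≠ v := Ne.symm ha.1
  have hbv : b ≠ v := Ne.symm hb.1
  have hcv : c ≠ v := Ne.symm hc.1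
  rcases hcov a ha with haR | haK <;> rcases hcov b hb with hbR | hbK
  · exact hR haR hbR hab
  · rcases hcov c hc with hcR | hcK
    · exact absurd hcb (hsep c hcR hcv b hbK hbv)
    · exact absurd hac (hsep a haR hav c hcK hcv)
  · rcases hcov c hc with hcR | hcK
    · exact absurd (hac.symm hQ) (hsep c hcR hcv a haK hav)
    · exact absurd (hcb.symm hQ) (hsep b hbR hbv c hcK hcv)
  · exact hK haK hbK hab

theorem Cond1.ncard_le_two (hc1 : Cond1 M) {v : V} {S : Set V} (hSv : S ⊆ nbrs M v)
    (hS : S.Pairwise fun a b => ¬ CQAdj M a b) : S.ncard ≤ 2 := by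
  rcases S.eq_empty_or_nonempty with rfl | ⟨u, hu⟩
  · simp
  obtain ⟨R, K, -, -, hR, hK, -, -, -, hcov, -⟩ := hc1 v ⟨u, hSv hu⟩
  have hle : ∀ T : Finset V, IsCliqueCQ M ↑T → (S ∩ T).ncard ≤ 1 := fun T hT =>
    (Set.ncard_le_one (T.finite_toSet.subset Set.inter_subset_right)).2 fun a ha b hb =>
      by_contra fun hab => hS ha.1 hb.1 hab (hT ha.2 hb.2 hab)
  calc S.ncard ≤ (S ∩ R ∪ S ∩ K).ncard :=
        Set.ncard_le_ncard (fun w hw => (hcov w (hSv hw)).imp (⟨hw, ·⟩) (⟨hw, ·⟩))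
          ((R.finite_toSet.subset Set.inter_subset_right).union
            (K.finite_toSet.subset Set.inter_subset_right))
    _ ≤ (S ∩ R).ncard + (S ∩ K).ncard := Set.ncard_union_le _ _
    _ ≤ 2 := by linarith [hle R hR, hle K hK]

theorem ncard_le_two_of_shiftedColour_eq (hM : MemQClass M) {v : V} {γ : ZMod (m + 2)}
    {S : Set V} (hS : ∀ u ∈ S, CQAdj M v u ∧ shiftedColour M v u = γ) : S.ncard ≤ 2 := by
  obtain ⟨hQ, hs, -, -, hc1, hc2⟩ := hM
  refine hc1.ncard_le_two (fun u hu => (hS u hu).1) fun a ha b hb hab hadj => ?_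
  obtain ⟨hva, hγa⟩ := hS a ha
  obtain ⟨hvb, hγb⟩ := hS b hb
  apply shiftedColour_ne_zero hs a b
  linear_combination shiftedColour_triangle hQ hc2 hva.1 hab hvb.1 hva hadj hvb
    - shiftedColour_swap hQ hs hvb + hγb - hγa

theorem ncard_out_zero_le_two (hM : MemQClass M) (v : V) : {u | M v u 0 ≠ 0}.ncard ≤ 2 :=
  ncard_le_two_of_shiftedColour_eq hM fun _ hu =>
    ⟨cqAdj_of_ne_zero hM.1 hu, shiftedColour_of_ne_zero hM.1 hM.2.1 hu⟩

theorem ncard_in_zero_le_two (hM : MemQClass M) (v : V) : {u | M u v 0 ≠ 0}.ncard ≤ 2 :=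
  ncard_le_two_of_shiftedColour_eq hM fun _ hu =>
    ⟨(cqAdj_of_ne_zero hM.1 hu).symm hM.1, by
      rw [shiftedColour_swap hM.1 hM.2.1 (cqAdj_of_ne_zero hM.1 hu),
        shiftedColour_of_ne_zero hM.1 hM.2.1 hu]⟩

def IsCycleCQ {k : ℕ} (M : V → V → Fin (m + 1) → ℕ) (y : ZMod k → V) : Prop :=
  Function.Injective y ∧ ∀ i, CQAdj M (y i) (y (i + 1))

theorem IsCycleCQ.exists_chord (hnh : ¬ HasHole M) {k : ℕ} (hk : 4 ≤ k) {y : ZMod k → V}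
    (hy : IsCycleCQ M y) :
    ∃ a b : ZMod k, a ≠ b ∧ b ≠ a + 1 ∧ a ≠ b + 1 ∧ CQAdj M (y a) (y b) := by
  by_contra! h
  exact hnh ⟨k, hk, y, hy.1, hy.2, h⟩

def cycleArc {α : Type*} {k : ℕ} (y : ZMod k → α) (a : ZMod k) (l : ℕ) : ZMod (l + 1) → α :=
  fun t => y (a + t.val)

theorem IsCycleCQ.isCycleCQ_cycleArc (hQ : IsColouredQuiver M) {k : ℕ} [NeZero k] {y : ZMod k → V}
    (hy : IsCycleCQ M y) {a : ZMod k} {l : ℕ} (hl : l < k)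
    (hchord : CQAdj M (y a) (y (a + l))) : IsCycleCQ M (cycleArc y a l) := by
  have hlt : ∀ t : ZMod (l + 1), t.val < k := fun t => (ZMod.val_lt t).trans_le (by omega)
  refine ⟨fun s t hst => ZMod.val_injective _ ?_, fun t => ?_⟩
  · have := congrArg ZMod.val (add_left_cancel (hy.1 hst))
    rwa [ZMod.val_cast_of_lt (hlt s), ZMod.val_cast_of_lt (hlt t)] at this
  rcases (Nat.lt_succ_iff.mp (ZMod.val_lt t)).lt_or_eq with ht | ht
  · have hsucc : (t + 1).val = t.val + 1 := by
      rw [ZMod.val_add, ZMod.val_one_eq_one_mod, Nat.one_mod_eq_one.mpr (by omega),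
        Nat.mod_eq_of_lt (by omega)]
    simpa only [cycleArc, hsucc, Nat.cast_succ, ← add_assoc] using hy.2 (a + t.val)
  · have hzero : t + 1 = 0 := by
      rw [← ZMod.natCast_zmod_val t, ht, ← Nat.cast_succ, ZMod.natCast_self]
    simpa [cycleArc, hzero, ht] using hchord.symm hQ

theorem mem_range_cycleArc {α : Type*} {k : ℕ} (y : ZMod k → α) (a : ZMod k) {l s : ℕ}
    (hs : s ≤ l) : y (a + s) ∈ Set.range (cycleArc y a l) :=
  ⟨s, by rw [cycleArc, ZMod.val_cast_of_lt (Nat.lt_succ_of_le hs)]⟩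

theorem range_subset_cycleArc_union {α : Type*} {k : ℕ} [NeZero k] (y : ZMod k → α)
    (a : ZMod k) (j : ℕ) :
    Set.range y ⊆ Set.range (cycleArc y a j) ∪ Set.range (cycleArc y (a + j) (k - j)) := by
  rintro _ ⟨i, rfl⟩
  have hi : i = a + (i - a).val := by rw [ZMod.natCast_zmod_val]; ring
  by_cases hs : (i - a).val ≤ j
  · exact .inl (hi ▸ mem_range_cycleArc y a hs)
  · have hi' : i = a + j + ((i - a).val - j : ℕ) := by
      rw [Nat.cast_sub (by omega)]
      linear_combination hi
    exact .inr (hi' ▸ mem_range_cycleArc y _ (by have := ZMod.val_lt (i - a); omega))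

theorem two_le_val_sub {k : ℕ} [NeZero k] {a b : ZMod k} (hab : a ≠ b) (hba : b ≠ a + 1)
    (hab' : a ≠ b + 1) : 2 ≤ (b - a).val ∧ (b - a).val + 2 ≤ k := by
  have hcast : ((b - a).val : ZMod k) = b - a := ZMod.natCast_zmod_val _
  have hlt : (b - a).val < k := ZMod.val_lt _
  refine ⟨by_contra fun h => ?_, by_contra fun h => hab' ?_⟩
  · interval_cases hj : (b - a).val
    · exact hab (by linear_combination hcast)
    · exact hba (by linear_combination -hcast)
  · rw [show (b - a).val = k - 1 by omega, Nat.cast_sub (by omega), ZMod.natCast_self] at hcast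
    linear_combination hcast

theorem IsCliqueCQ.union (hQ : IsColouredQuiver M) (hc1 : Cond1 M) {S T : Set V}
    (hS : IsCliqueCQ M S) (hT : IsCliqueCQ M T) {v c : V} (hv : v ∈ S ∩ T) (hc : c ∈ S ∩ T)
    (hvc : v ≠ c) : IsCliqueCQ M (S ∪ T) := by
  have hcross : ∀ a ∈ S, ∀ b ∈ T, a ≠ b → CQAdj M a b := by
    intro a ha b hb hab
    by_cases haT : a ∈ T
    · exact hT haT hb hab
    by_cases hbS : b ∈ S
    · exact hS ha hbS hab
    have hav : a ≠ v := fun h => haT (h ▸ hv.2)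
    have hac : a ≠ c := fun h => haT (h ▸ hc.2)
    have hbv : b ≠ v := fun h => hbS (h ▸ hv.1)
    have hbc : b ≠ c := fun h => hbS (h ▸ hc.1)
    exact hc1.cqAdj_trans hQ (hS hv.1 ha (Ne.symm hav)) (hT hv.2 hb (Ne.symm hbv))
      (hS hv.1 hc.1 hvc) hab (hS ha hc.1 hac) (hT hc.2 hb (Ne.symm hbc))
  exact Set.pairwise_union.2 ⟨hS, hT, fun a ha b hb hab =>
    ⟨hcross a ha b hb hab, (hcross a ha b hb hab).symm hQ⟩⟩

theorem IsCycleCQ.isCliqueCQ (hQ : IsColouredQuiver M) (hnh : ¬ HasHole M) (hc1 : Cond1 M)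
    {k : ℕ} (hk : 3 ≤ k) {y : ZMod k → V} (hy : IsCycleCQ M y) :
    IsCliqueCQ M (Set.range y) := by
  induction k using Nat.strong_induction_on with
  | _ k IH =>
  rcases hk.eq_or_lt with rfl | hk4
  · rintro _ ⟨i, rfl⟩ _ ⟨j, rfl⟩ hij
    have hcyc : ∀ i j : ZMod 3, i ≠ j → j = i + 1 ∨ i = j + 1 := by decide
    rcases hcyc i j (ne_of_apply_ne y hij) with rfl | rfl
    · exact hy.2 i
    · exact (hy.2 j).symm hQ
  have : NeZero k := ⟨by omega⟩
  obtain ⟨a, b, hab, hba, hab', hchord⟩ := hy.exists_chord hnh hk4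
  obtain ⟨hj2, hjk⟩ := two_le_val_sub hab hba hab'
  set j := (b - a).val
  have hb : b = a + j := by rw [ZMod.natCast_zmod_val]; ring
  have ha : a = b + (k - j : ℕ) := by rw [Nat.cast_sub (by omega), ZMod.natCast_self, hb]; ring
  have h₁ : IsCliqueCQ M (Set.range (cycleArc y a j)) :=
    IH (j + 1) (by omega) (by omega) (hy.isCycleCQ_cycleArc hQ (by omega) (hb ▸ hchord))
  have h₂ : IsCliqueCQ M (Set.range (cycleArc y b (k - j))) :=
    IH (k - j + 1) (by omega) (by omega) (hy.isCycleCQ_cycleArc hQ (by omega) (ha ▸ hchord.symm hQ))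
  have ha₁ : y a ∈ Set.range (cycleArc y a j) := by
    simpa using mem_range_cycleArc y a (Nat.zero_le j)
  have hb₂ : y b ∈ Set.range (cycleArc y b (k - j)) := by
    simpa using mem_range_cycleArc y b (Nat.zero_le (k - j))
  have hb₁ : y b ∈ Set.range (cycleArc y a j) := hb ▸ mem_range_cycleArc y a le_rfl
  have ha₂ : y a ∈ Set.range (cycleArc y b (k - j)) := ha ▸ mem_range_cycleArc y b le_rfl
  refine Set.Pairwise.mono ?_ (h₁.union hQ hc1 h₂ ⟨ha₁, ha₂⟩ ⟨hb₁, hb₂⟩ (hy.1.ne hab))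
  exact hb ▸ range_subset_cycleArc_union y a j

theorem two_ne_zero_of_three_le {n : ℕ} (hn : 3 ≤ n) : (2 : ZMod n) ≠ 0 := by
  rw [Ne, ← Nat.cast_ofNat, ZMod.natCast_eq_zero_iff]
  exact fun h => absurd (Nat.le_of_dvd two_pos h) (by omega)

theorem eq_apply_zero_of_forall_add_one {k : ℕ} [NeZero k] {α : Type*} {f : ZMod k → α}
    (h : ∀ i, f (i + 1) = f i) (i : ZMod k) : f i = f 0 := by
  obtain ⟨n, rfl⟩ := ZMod.natCast_zmod_surjective i
  induction n with
  | zero => rw [Nat.cast_zero]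
  | succ n ih => rw [Nat.cast_succ, h, ih]

theorem sum_sub_add_one_eq_zero {k : ℕ} [NeZero k] {G : Type*} [AddCommGroup G]
    (q : ZMod k → G) : ∑ i, (q (i + 1) - q i) = 0 := by
  rw [Finset.sum_sub_distrib, sub_eq_zero]
  exact Equiv.sum_comp (Equiv.addRight 1) q

theorem steps_eq_or_of_injective {k : ℕ} [NeZero k] (hk : 3 ≤ k) {G : Type*} [AddCommGroup G]
    {q : ZMod k → G} (hq : Function.Injective q) {d : G}
    (hstep : ∀ i, q (i + 1) - q i = d ∨ q (i + 1) - q i = -d) :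
    (∀ i, q (i + 1) - q i = d) ∨ ∀ i, q (i + 1) - q i = -d := by
  have hconst : ∀ i, q (i + 1 + 1) - q (i + 1) = q (i + 1) - q i := by
    intro i
    by_contra hne
    have hback : q (i + 1 + 1) = q i := by
      rcases hstep i with h | h <;> rcases hstep (i + 1) with h' | h'
      · exact absurd (h'.trans h.symm) hne
      · rw [← sub_eq_zero, ← sub_add_sub_cancel _ (q (i + 1)), h, h', neg_add_cancel]
      · rw [← sub_eq_zero, ← sub_add_sub_cancel _ (q (i + 1)), h, h', add_neg_cancel]
      · exact absurd (h'.trans h.symm) hne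
    exact two_ne_zero_of_three_le hk (by linear_combination hq hback)
  have h0 := eq_apply_zero_of_forall_add_one (f := fun i => q (i + 1) - q i) hconst
  rcases hstep 0 with h | h
  · exact .inl fun i => (h0 i).trans h
  · exact .inr fun i => (h0 i).trans h

theorem eq_of_injective_of_steps_eq {n k : ℕ} [NeZero n] [NeZero k] {q : ZMod k → ZMod n}
    (hq : Function.Injective q) {d : ZMod n} (hd : IsUnit d) (hstep : ∀ i, q (i + 1) - q i = d) :
    k = n := by
  have hle : k ≤ n := by simpa using Fintype.card_le_of_injective q hq
  have hk : (k : ZMod n) = 0 := by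
    have := sum_sub_add_one_eq_zero q
    simp only [hstep, Finset.sum_const, Finset.card_univ, ZMod.card, nsmul_eq_mul] at this
    exact hd.mul_left_eq_zero.mp this
  exact le_antisymm hle (Nat.le_of_dvd (Nat.pos_of_ne_zero (NeZero.ne k))
    ((ZMod.natCast_eq_zero_iff k n).mp hk))

theorem zero_coloured_cycle_length_eq_and_oriented (hM : MemQClass M) {k : ℕ} [NeZero k]
    (hk : 3 ≤ k) {y : ZMod k → V} (hy : Function.Injective y)
    (h0 : ∀ i, M (y i) (y (i + 1)) 0 ≠ 0 ∨ M (y (i + 1)) (y i) 0 ≠ 0) :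
    k = m + 2 ∧ ((∀ i, M (y i) (y (i + 1)) 0 ≠ 0) ∨ ∀ i, M (y (i + 1)) (y i) 0 ≠ 0) := by
  obtain ⟨hQ, hs, -, hnh, hc1, hc2⟩ := hM
  have hcyc : IsCycleCQ M y := ⟨hy, fun i => (h0 i).elim (cqAdj_of_ne_zero hQ)
    fun h => (cqAdj_of_ne_zero hQ h).symm hQ⟩
  obtain ⟨φ, hφ⟩ := (hcyc.isCliqueCQ hQ hnh hc1 hk).exists_potential hQ hs hc2
  have hsc : ∀ i j, y i ≠ y j → shiftedColour M (y i) (y j) = φ (y j) - φ (y i) :=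
    fun i j => hφ _ ⟨i, rfl⟩ _ ⟨j, rfl⟩
  have hq : Function.Injective (φ ∘ y) := fun i j h => by_contra fun hij =>
    shiftedColour_ne_zero hs (y i) (y j) (by
      rw [hsc i j (hy.ne hij)]
      exact sub_eq_zero.mpr h.symm)
  have hfwd : ∀ i, M (y i) (y (i + 1)) 0 ≠ 0 → φ (y (i + 1)) - φ (y i) = 1 := fun i h =>
    (hsc i (i + 1) (hcyc.2 i).1).symm.trans (shiftedColour_of_ne_zero hQ hs h)
  have hbwd : ∀ i, M (y (i + 1)) (y i) 0 ≠ 0 → φ (y (i + 1)) - φ (y i) = -1 := fun i h => by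
    rw [← neg_sub, ← hsc (i + 1) i (hcyc.2 i).1.symm, shiftedColour_of_ne_zero hQ hs h]
  have hsteps := steps_eq_or_of_injective hk hq (d := 1) fun i => (h0 i).imp (hfwd i) (hbwd i)
  have hkm : k = m + 2 := hsteps.elim (eq_of_injective_of_steps_eq hq isUnit_one)
    (eq_of_injective_of_steps_eq hq isUnit_one.neg)
  have h2 : (1 : ZMod (m + 2)) ≠ -1 := fun h =>
    two_ne_zero_of_three_le (hkm ▸ hk) (by linear_combination h)
  refine ⟨hkm, hsteps.imp (fun h i => ?_) (fun h i => ?_)⟩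
  · exact (h0 i).resolve_right fun hb => h2 ((h i).symm.trans (hbwd i hb))
  · exact (h0 i).resolve_left fun hf => h2 ((hfwd i hf).symm.trans (h i))

theorem cyc_eq_add_one {k : ℕ} [NeZero k] (i : Fin k) : cyc i = i + 1 :=
  Fin.ext (by simp [cyc, Fin.val_add])

theorem zero_coloured_part_properties_general (m : ℕ) (V : Type)
    (M : V → V → Fin (m + 1) → ℕ) (hM : MemQClass M) :
    (∀ v : V, {u : V | M v u 0 ≠ 0}.ncard ≤ 2 ∧ {u : V | M u v 0 ≠ 0}.ncard ≤ 2) ∧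
    (∀ k : ℕ, 3 ≤ k → ∀ x : Fin k → V, Function.Injective x →
      (∀ i : Fin k, M (x i) (x (cyc i)) 0 ≠ 0 ∨ M (x (cyc i)) (x i) 0 ≠ 0) →
      k = m + 2 ∧
        ((∀ i : Fin k, M (x i) (x (cyc i)) 0 ≠ 0) ∨
          (∀ i : Fin k, M (x (cyc i)) (x i) 0 ≠ 0))) := by
  refine ⟨fun v => ⟨ncard_out_zero_le_two hM v, ncard_in_zero_le_two hM v⟩,
    fun k hk x hx h0 => ?_⟩
  have : NeZero k := ⟨by omega⟩
  let e := (ZMod.finEquiv k).toEquiv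
  have hself : ∀ i, x i = (x ∘ e.symm) (e i) := fun i => by simp
  have hsucc : ∀ i, x (cyc i) = (x ∘ e.symm) (e i + 1) := fun i => by
    simp [e, cyc_eq_add_one]
  simp only [hsucc, hself] at h0 ⊢
  obtain ⟨hkm, hor⟩ := zero_coloured_cycle_length_eq_and_oriented hM hk
    (hx.comp e.symm.injective) (e.forall_congr_right.mp h0)
  exact ⟨hkm, hor.imp e.forall_congr_right.mpr e.forall_congr_right.mpr⟩

/-- The quiver of an `m`-cluster tilted algebra of type `Aₙ` (the `0`-coloured
part of a quiver in `𝒬ₙᵐ`): every vertex is the source of at most two arrows and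
the target of at most two arrows, and the only cycles in it are oriented cycles
of length `m + 2`. -/
theorem zero_coloured_part_properties (m : ℕ) (hm : 1 ≤ m)
    (V : Type) [Fintype V] [DecidableEq V]
    (M : V → V → Fin (m + 1) → ℕ) (hM : MemQClass M) :
    (∀ v : V, {u : V | M v u 0 ≠ 0}.ncard ≤ 2 ∧ {u : V | M u v 0 ≠ 0}.ncard ≤ 2) ∧
    (∀ k : ℕ, 3 ≤ k → ∀ x : Fin k → V, Function.Injective x →
      (∀ i : Fin k, M (x i) (x (cyc i)) 0 ≠ 0 ∨ M (x (cyc i)) (x i) 0 ≠ 0) →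
      k = m + 2 ∧
        ((∀ i : Fin k, M (x i) (x (cyc i)) 0 ≠ 0) ∨
          (∀ i : Fin k, M (x (cyc i)) (x i) 0 ≠ 0))) :=
  zero_coloured_part_properties_general m V M hM

end MutClassAn
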